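/- arXiv:1709.08651 — 2 statements merged into one kernel-verified Lean document; each statement's English description precedes it below -/
import Mathlib

section
/- Let ξ ∈ (0, π), φ ∈ ℝ, and let E be the L×K matrix with entries E[i,j] = cos(ξ(i+j) + φ), 0 ≤ i < L, 0 ≤ j < K. Then the spectral norm of EEᵀ satisfies ‖EEᵀ‖ ≤ LK/2 + L·|sin(Kξ)|/(2 sin ξ). -/
open Matrix

/-- The spectral (ℓ²-operator) norm of a matrix. -/
noncomputable def specNorm {m n : ℕ} (A : Matrix (Fin m) (Fin n) ℝ) : ℝ :=
  ‖(Matrix.toEuclideanLin A).toContinuousLinearMap‖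

open Real Finset

/-!
Each entry of `E Eᵀ` is a sum of products of cosines, which the product-to-sum formula turns into
`(K cos ((i - j) ξ) + ∑_{k < K} cos (θ + 2 k ξ)) / 2`. Multiplying the last sum by `sin ξ`
telescopes it to `sin (K ξ) cos (θ + (K - 1) ξ)`, so every entry is at most
`c = K / 2 + |sin (K ξ)| / (2 sin ξ)` in absolute value. The spectral norm is bounded by the
Frobenius norm, which for an `L × L` matrix with entries bounded by `c` is at most `L c`.
-/

theorem sum_range_cos_mul_sin (θ ξ : ℝ) (K : ℕ) :
    (∑ k ∈ range K, cos (θ + 2 * k * ξ)) * sin ξ = sin (K * ξ) * cos (θ + (K - 1) * ξ) := by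
  induction K with
  | zero => simp
  | succ n ih =>
    rw [sum_range_succ, add_mul, ih]
    push_cast
    have e1 : ((n : ℝ) + 1) * ξ = n * ξ + ξ := by ring
    have e2 : θ + ((n : ℝ) + 1 - 1) * ξ = θ + n * ξ := by ring
    have e3 : θ + 2 * (n : ℝ) * ξ = (θ + n * ξ) + n * ξ := by ring
    have e4 : θ + ((n : ℝ) - 1) * ξ = (θ + n * ξ) - ξ := by ring
    rw [e1, e2, e3, e4, sin_add, cos_add, cos_sub]
    ring

theorem abs_sum_range_cos_le (θ ξ : ℝ) (K : ℕ) (hξ : sin ξ ≠ 0) :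
    |∑ k ∈ range K, cos (θ + 2 * k * ξ)| ≤ |sin (K * ξ)| / |sin ξ| := by
  rw [eq_div_of_mul_eq hξ (sum_range_cos_mul_sin θ ξ K), abs_div, abs_mul]
  gcongr
  exact mul_le_of_le_one_right (abs_nonneg _) (abs_cos_le_one _)

theorem sum_range_cos_mul_cos (a b ξ : ℝ) (K : ℕ) :
    ∑ k ∈ range K, cos (a + k * ξ) * cos (b + k * ξ)
      = (K * cos (a - b) + ∑ k ∈ range K, cos (a + b + 2 * k * ξ)) / 2 := by
  have hterm (k : ℕ) : cos (a + k * ξ) * cos (b + k * ξ)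
      = (cos (a - b) + cos (a + b + 2 * k * ξ)) / 2 := by
    rw [eq_div_iff two_ne_zero, mul_comm, ← mul_assoc, two_mul_cos_mul_cos]
    congr 2 <;> ring
  rw [sum_congr rfl fun k _ => hterm k, ← sum_div, sum_add_distrib, sum_const, card_range,
    nsmul_eq_mul]

theorem abs_sum_range_cos_mul_cos_le (a b ξ : ℝ) (K : ℕ) (hξ : sin ξ ≠ 0) :
    |∑ k ∈ range K, cos (a + k * ξ) * cos (b + k * ξ)|
      ≤ K / 2 + |sin (K * ξ)| / (2 * |sin ξ|) := by
  have hK : |K * cos (a - b)| ≤ K := by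
    rw [abs_mul, Nat.abs_cast]
    exact mul_le_of_le_one_right K.cast_nonneg (abs_cos_le_one _)
  rw [sum_range_cos_mul_cos, abs_div, abs_two]
  calc |K * cos (a - b) + ∑ k ∈ range K, cos (a + b + 2 * k * ξ)| / 2
      ≤ (K + |sin (K * ξ)| / |sin ξ|) / 2 := by
        gcongr
        exact (abs_add_le _ _).trans (add_le_add hK (abs_sum_range_cos_le _ _ _ hξ))
    _ = K / 2 + |sin (K * ξ)| / (2 * |sin ξ|) := by ring

theorem specNorm_le_sqrt_sum_sq {m n : ℕ} (A : Matrix (Fin m) (Fin n) ℝ) :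
    specNorm A ≤ √(∑ i, ∑ j, A i j ^ 2) := by
  refine ContinuousLinearMap.opNorm_le_bound _ (sqrt_nonneg _) fun x => ?_
  have hx : ‖x‖ = √(∑ j, x j ^ 2) := by simp [EuclideanSpace.norm_eq]
  change ‖Matrix.toEuclideanLin A x‖ ≤ _
  rw [EuclideanSpace.norm_eq, hx, ← sqrt_mul (by positivity), sum_mul]
  gcongr with i
  rw [Real.norm_eq_abs, sq_abs]
  exact sum_mul_sq_le_sq_mul_sq univ (A i) x.ofLp

theorem specNorm_le_of_abs_le {m n : ℕ} (A : Matrix (Fin m) (Fin n) ℝ) {c : ℝ} (hc : 0 ≤ c)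
    (hA : ∀ i j, |A i j| ≤ c) : specNorm A ≤ √(m * n) * c := by
  refine (specNorm_le_sqrt_sum_sq A).trans ?_
  have hsq (i j) : A i j ^ 2 ≤ c ^ 2 := by
    rw [← sq_abs]; exact pow_le_pow_left₀ (abs_nonneg _) (hA i j) 2
  calc √(∑ i, ∑ j, A i j ^ 2) ≤ √(∑ _i : Fin m, ∑ _j : Fin n, c ^ 2) :=
        sqrt_le_sqrt (sum_le_sum fun i _ => sum_le_sum fun j _ => hsq i j)
    _ = √(m * n) * c := by
      simp only [sum_const, card_univ, Fintype.card_fin, nsmul_eq_mul]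
      rw [← mul_assoc, sqrt_mul (by positivity), sqrt_sq hc]

/-- spectral-norm bound for `EEᵀ`, where `E` is the Hankel matrix
of the harmonic noise `cos(ξn + φ)`. -/
theorem stmt_10 (ξ φ : ℝ) (hξ : ξ ∈ Set.Ioo 0 Real.pi) (L K : ℕ)
    (E : Matrix (Fin L) (Fin K) ℝ)
    (hE : ∀ (i : Fin L) (j : Fin K), E i j = Real.cos (ξ * (((i : ℕ) + (j : ℕ) : ℕ) : ℝ) + φ)) :
    specNorm (E * Eᵀ) ≤
      (L : ℝ) * (K : ℝ) / 2 + (L : ℝ) * |Real.sin ((K : ℝ) * ξ)| / (2 * Real.sin ξ) := by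
  have hsin : 0 < sin ξ := sin_pos_of_pos_of_lt_pi hξ.1 hξ.2
  have hentry (i j : Fin L) : (E * Eᵀ) i j
      = ∑ k ∈ range K, cos ((ξ * i + φ) + k * ξ) * cos ((ξ * j + φ) + k * ξ) := by
    simp only [Matrix.mul_apply, Matrix.transpose_apply, hE]
    rw [← Fin.sum_univ_eq_sum_range]
    refine sum_congr rfl fun k _ => ?_
    push_cast
    ring_nf
  have hbound := specNorm_le_of_abs_le (E * Eᵀ) (by positivity) fun i j =>
    (hentry i j).symm ▸ abs_sum_range_cos_mul_cos_le _ _ ξ K hsin.ne'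
  rw [abs_of_pos hsin, sqrt_mul_self L.cast_nonneg] at hbound
  exact hbound.trans_eq (by ring)
end

section
/- There exist a constant C > 0 and an integer N₀ such that for every N ≥ N₀ and every δ ∈ ℝ: ‖S₀ B(δ)‖ ≤ C·(|δ| + δ²)/N, where ‖·‖ is the spectral norm. In particular, for each fixed δ, ‖S₀B(δ)‖ = O(1/N) as N → ∞. -/
/-!
Because `H = W_L W_Kᵀ`, the matrix `S₀ B(δ)` has rank one: it is `c • W_L (W_Lᵀ B)` with
`c = ‖W_L‖⁻⁴ ‖W_K‖⁻²`, so its spectral norm is `c ‖W_L‖ ‖W_Lᵀ B‖`. Expanding `W_Lᵀ B(δ)`, each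
term is controlled by the entries of `E W_K` and `W_Lᵀ E`. These are sums `∑ zⁱ cos (ξ i + θ)`
with `z = a^{T/N}`, i.e. real parts of geometric sums of ratio `z e^{iξ}`, and are therefore
bounded by `(a^T + 1) / sin ξ` uniformly in `N`. Every entry of `W_M` is at least `1`, so
`‖W_L‖² ≥ L` and `‖W_K‖² ≥ K`, and both `L` and `K` are of order `N` since `L/N → α ∈ (0, 1)`.
-/

open Filter Matrix

/-- Hankelization (diagonal averaging): the `j`-th value is the average of the
entries `Y i k` with `i + k = j`. -/
noncomputable def hankelize {L K : ℕ} (Y : Matrix (Fin L) (Fin K) ℝ) (j : ℕ) : ℝ :=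
  (∑ i : Fin L, ∑ k : Fin K, if (i : ℕ) + (k : ℕ) = j then Y i k else 0) /
  (∑ i : Fin L, ∑ k : Fin K, if (i : ℕ) + (k : ℕ) = j then (1 : ℝ) else 0)

/-- Squared Euclidean norm of a vector. -/
noncomputable def normSq {M : ℕ} (w : Fin M → ℝ) : ℝ := ∑ i, w i ^ 2

/-- `u` is a unit eigenvector of `A` corresponding to its largest eigenvalue. -/
def IsTopEigenvector {L : ℕ} (A : Matrix (Fin L) (Fin L) ℝ) (u : Fin L → ℝ) : Prop :=
  normSq u = 1 ∧ ∃ μ : ℝ, A.mulVec u = μ • u ∧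
    ∀ (ν : ℝ) (v : Fin L → ℝ), v ≠ 0 → A.mulVec v = ν • v → ν ≤ μ

/-- The discretized exponential signal `x_n = a^{nT/N}`. -/
noncomputable def xdisc (a T : ℝ) (N : ℕ) : ℕ → ℝ := fun n => a ^ ((n : ℝ) * T / (N : ℝ))

/-- The `L × K` Hankel matrix of the discretized signal. -/
noncomputable def Hd (a T : ℝ) (N L K : ℕ) : Matrix (Fin L) (Fin K) ℝ :=
  Matrix.of fun i k => xdisc a T N ((i : ℕ) + (k : ℕ))

/-- The `L × K` Hankel matrix of the harmonic noise `e_n = cos(ξ n + φ)`. -/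
noncomputable def Ed (ξ φ : ℝ) (L K : ℕ) : Matrix (Fin L) (Fin K) ℝ :=
  Matrix.of fun i k => Real.cos (ξ * (((i : ℕ) + (k : ℕ) : ℕ) : ℝ) + φ)

/-- The vector `W_M = (1, a^{T/N}, …, a^{(M-1)T/N})ᵀ`. -/
noncomputable def Wd (a T : ℝ) (N M : ℕ) : Fin M → ℝ := fun i => a ^ (((i : ℕ) : ℝ) * T / (N : ℝ))

/-- `B(δ) = δ(HEᵀ + EHᵀ) + δ²EEᵀ`. -/
noncomputable def Bmat (a T ξ φ δ : ℝ) (N L K : ℕ) : Matrix (Fin L) (Fin L) ℝ :=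
  δ • (Hd a T N L K * (Ed ξ φ L K)ᵀ + Ed ξ φ L K * (Hd a T N L K)ᵀ)
  + δ ^ 2 • (Ed ξ φ L K * (Ed ξ φ L K)ᵀ)

/-- The max-norm of a matrix: the maximum of the absolute values of its entries. -/
noncomputable def maxNorm {m n : ℕ} (A : Matrix (Fin m) (Fin n) ℝ) : ℝ :=
  ⨆ p : Fin m × Fin n, |A p.1 p.2|

open scoped Matrix.Norms.L2Operator
open WithLp

theorem Matrix.l2_opNorm_vecMulVec {𝕜 m n : Type*} [RCLike 𝕜] [Fintype m] [Fintype n]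
    [DecidableEq n] (x : m → 𝕜) (y : n → 𝕜) :
    ‖vecMulVec x (star y)‖ = ‖toLp 2 x‖ * ‖toLp 2 y‖ := by
  rw [← InnerProductSpace.norm_rankOne (𝕜 := 𝕜), ← InnerProductSpace.symm_toEuclideanLin_rankOne,
    l2_opNorm_def, LinearEquiv.trans_apply, LinearEquiv.apply_symm_apply]
  rfl

theorem EuclideanSpace.norm_toLp_le_sqrt_card_mul {ι : Type*} [Fintype ι] {v : ι → ℝ} {D : ℝ}
    (h : ∀ i, |v i| ≤ D) : ‖toLp 2 v‖ ≤ √(Fintype.card ι) * D := by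
  rcases isEmpty_or_nonempty ι with _ | ⟨⟨i₀⟩⟩
  · simp [EuclideanSpace.norm_eq]
  have hD : 0 ≤ D := (abs_nonneg _).trans (h i₀)
  rw [EuclideanSpace.norm_eq, ← Real.sqrt_sq hD, ← Real.sqrt_mul (Nat.cast_nonneg _)]
  gcongr
  calc ∑ i, ‖v i‖ ^ 2 ≤ ∑ _i : ι, D ^ 2 := by
        gcongr with i
        simpa using h i
    _ = _ := by simp

theorem abs_dotProduct_le_norm_mul_norm {ι : Type*} [Fintype ι] (v w : ι → ℝ) :
    |v ⬝ᵥ w| ≤ ‖toLp 2 v‖ * ‖toLp 2 w‖ := by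
  simpa [EuclideanSpace.inner_toLp_toLp, dotProduct_comm] using
    abs_real_inner_le_norm (toLp 2 v) (toLp 2 w)

theorem normSq_eq_norm_toLp_sq {M : ℕ} (v : Fin M → ℝ) : normSq v = ‖toLp 2 v‖ ^ 2 := by
  simp [normSq, EuclideanSpace.real_norm_sq_eq]

theorem specNorm_eq_l2_opNorm {m n : ℕ} (A : Matrix (Fin m) (Fin n) ℝ) : specNorm A = ‖A‖ := rfl

def perturbationMatrix {m n : Type*} [Fintype n] (H E : Matrix m n ℝ) (δ : ℝ) : Matrix m m ℝ :=
  δ • (H * Eᵀ + E * Hᵀ) + δ ^ 2 • (E * Eᵀ)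

theorem vecMul_perturbationMatrix_vecMulVec {m n : Type*} [Fintype m] [Fintype n]
    (u : m → ℝ) (w : n → ℝ) (E : Matrix m n ℝ) (δ : ℝ) :
    u ᵥ* perturbationMatrix (vecMulVec u w) E δ
      = δ • ((u ⬝ᵥ u) • (E *ᵥ w) + (u ⬝ᵥ E *ᵥ w) • u) + δ ^ 2 • (E *ᵥ (u ᵥ* E)) := by
  simp only [perturbationMatrix, vecMul_add, vecMul_smul, ← vecMul_vecMul, vecMul_vecMulVec,
    vecMul_transpose, transpose_vecMulVec, mul_vecMulVec, mulVec_smul]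

theorem abs_mulVec_le_card_mul {m n : Type*} [Fintype n] {E : Matrix m n ℝ}
    (hE : ∀ i k, |E i k| ≤ 1) {g : n → ℝ} {c : ℝ} (hg : ∀ k, |g k| ≤ c) (i : m) :
    |(E *ᵥ g) i| ≤ Fintype.card n * c :=
  calc |(E *ᵥ g) i| ≤ ∑ k, |E i k * g k| := Finset.abs_sum_le_sum_abs _ _
    _ ≤ ∑ _k : n, c := by
        gcongr with k
        rw [abs_mul]
        exact (mul_le_mul (hE i k) (hg k) (abs_nonneg _) zero_le_one).trans_eq (one_mul c)
    _ = Fintype.card n * c := by simp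

theorem norm_vecMul_perturbationMatrix_le {L K : ℕ} (u : Fin L → ℝ) (w : Fin K → ℝ)
    {E : Matrix (Fin L) (Fin K) ℝ} {c : ℝ} (hE : ∀ i k, |E i k| ≤ 1)
    (hEw : ∀ i, |(E *ᵥ w) i| ≤ c) (huE : ∀ k, |(u ᵥ* E) k| ≤ c) (δ : ℝ) :
    ‖toLp 2 (u ᵥ* perturbationMatrix (vecMulVec u w) E δ)‖
      ≤ √L * c * (2 * |δ| * ‖toLp 2 u‖ ^ 2 + δ ^ 2 * K) := by
  have hEw' : ‖toLp 2 (E *ᵥ w)‖ ≤ √L * c := by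
    simpa using EuclideanSpace.norm_toLp_le_sqrt_card_mul hEw
  have hEuE : ‖toLp 2 (E *ᵥ (u ᵥ* E))‖ ≤ √L * (K * c) := by
    simpa using EuclideanSpace.norm_toLp_le_sqrt_card_mul (abs_mulVec_le_card_mul hE huE)
  have huu : u ⬝ᵥ u = ‖toLp 2 u‖ ^ 2 := by
    rw [← normSq_eq_norm_toLp_sq]
    simp [normSq, dotProduct, sq]
  have hCS := abs_dotProduct_le_norm_mul_norm u (E *ᵥ w)
  rw [vecMul_perturbationMatrix_vecMulVec, huu]
  simp only [WithLp.toLp_add, WithLp.toLp_smul]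
  calc _ ≤ |δ| * (‖toLp 2 u‖ ^ 2 * ‖toLp 2 (E *ᵥ w)‖ + |u ⬝ᵥ E *ᵥ w| * ‖toLp 2 u‖)
          + δ ^ 2 * ‖toLp 2 (E *ᵥ (u ᵥ* E))‖ := by
        refine (norm_add_le _ _).trans ?_
        rw [norm_smul, norm_smul, Real.norm_eq_abs, Real.norm_eq_abs, abs_sq]
        gcongr
        refine (norm_add_le _ _).trans ?_
        rw [norm_smul, norm_smul, Real.norm_eq_abs, Real.norm_eq_abs, abs_sq]
    _ ≤ |δ| * (‖toLp 2 u‖ ^ 2 * (√L * c) + ‖toLp 2 u‖ * (√L * c) * ‖toLp 2 u‖)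
          + δ ^ 2 * (√L * (K * c)) := by
        gcongr
        exact hCS.trans (by gcongr)
    _ = _ := by ring

theorem norm_smul_vecMulVec_mul_perturbationMatrix_le {L K : ℕ} (hL : 0 < L) (hK : 0 < K)
    {u : Fin L → ℝ} {w : Fin K → ℝ} {E : Matrix (Fin L) (Fin K) ℝ} {c : ℝ}
    (hu : (L : ℝ) ≤ normSq u) (hw : (K : ℝ) ≤ normSq w) (hE : ∀ i k, |E i k| ≤ 1)
    (hEw : ∀ i, |(E *ᵥ w) i| ≤ c) (huE : ∀ k, |(u ᵥ* E) k| ≤ c) (δ : ℝ) :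
    ‖((normSq u ^ 2 * normSq w)⁻¹ • vecMulVec u u) * perturbationMatrix (vecMulVec u w) E δ‖
      ≤ c * (2 * |δ| / K + δ ^ 2 / L) := by
  have hc : 0 ≤ c := (abs_nonneg _).trans (hEw ⟨0, hL⟩)
  have hv := norm_vecMul_perturbationMatrix_le u w hE hEw huE δ
  rw [normSq_eq_norm_toLp_sq] at hu hw ⊢
  rw [normSq_eq_norm_toLp_sq, smul_mul_assoc, norm_smul, vecMulVec_mul,
    ← star_trivial (u ᵥ* _), l2_opNorm_vecMulVec, Real.norm_of_nonneg (by positivity)]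
  set p := ‖toLp 2 u‖
  set q := ‖toLp 2 w‖
  have hLpos : (0 : ℝ) < L := Nat.cast_pos.mpr hL
  have hKpos : (0 : ℝ) < K := Nat.cast_pos.mpr hK
  have hp : 0 < p ^ 2 := hLpos.trans_le hu
  have hq : 0 < q ^ 2 := hKpos.trans_le hw
  have hp0 : p ≠ 0 := fun h => by simp [h] at hp
  have hsqrtL : √L ≤ p := Real.sqrt_le_iff.mpr ⟨norm_nonneg _, hu⟩
  calc ((p ^ 2) ^ 2 * q ^ 2)⁻¹ * (p * ‖toLp 2 (u ᵥ* _)‖)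
      ≤ ((p ^ 2) ^ 2 * q ^ 2)⁻¹ * (p * (p * c * (2 * |δ| * p ^ 2 + δ ^ 2 * K))) := by
        gcongr
        exact hv.trans (by gcongr)
    _ = c * (2 * |δ| / q ^ 2 + δ ^ 2 / p ^ 2 * (K / q ^ 2)) := by
        field_simp
    _ ≤ c * (2 * |δ| / K + δ ^ 2 / L * 1) := by
        gcongr
        exact div_le_one_of_le₀ hw hq.le
    _ = c * (2 * |δ| / K + δ ^ 2 / L) := by rw [mul_one]

open Complex in
theorem abs_sum_pow_mul_cos_le {z ξ : ℝ} (hz : 1 ≤ z) (hξ : 0 < Real.sin ξ) (θ : ℝ) (M : ℕ) :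
    |∑ i ∈ Finset.range M, z ^ i * Real.cos (ξ * i + θ)| ≤ (z ^ M + 1) / Real.sin ξ := by
  set w : ℂ := z * exp (ξ * I)
  have hw_norm : ‖w‖ = z := by simp [w, abs_of_nonneg (zero_le_one.trans hz)]
  have hw_im : (w - 1).im = z * Real.sin ξ := by simp [w, exp_ofReal_mul_I_im]
  have hw_dist : Real.sin ξ ≤ ‖w - 1‖ := calc
    Real.sin ξ ≤ z * Real.sin ξ := le_mul_of_one_le_left hξ.le hz
    _ = |(w - 1).im| := by rw [hw_im, abs_of_pos (by positivity)]
    _ ≤ ‖w - 1‖ := abs_im_le_norm _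
  have hw1 : w - 1 ≠ 0 := norm_pos_iff.mp (hξ.trans_le hw_dist)
  have hsum : ∑ i ∈ Finset.range M, z ^ i * Real.cos (ξ * i + θ)
      = (exp (θ * I) * ∑ i ∈ Finset.range M, w ^ i).re := by
    rw [Finset.mul_sum, re_sum]
    refine Finset.sum_congr rfl fun i _ => ?_
    have : exp (θ * I) * w ^ i = ((z ^ i : ℝ) : ℂ) * exp ((ξ * i + θ : ℝ) * I) := by
      rw [mul_pow, ← exp_nat_mul, mul_left_comm, ← exp_add]
      push_cast
      ring_nf
    rw [this, re_ofReal_mul, exp_ofReal_mul_I_re]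
  rw [hsum, geom_sum_eq (sub_ne_zero.mp hw1)]
  calc _ ≤ ‖exp (θ * I) * ((w ^ M - 1) / (w - 1))‖ := abs_re_le_norm _
    _ = ‖w ^ M - 1‖ / ‖w - 1‖ := by rw [norm_mul, norm_exp_ofReal_mul_I, one_mul, norm_div]
    _ ≤ (z ^ M + 1) / Real.sin ξ := by
        gcongr
        calc ‖w ^ M - 1‖ ≤ ‖w ^ M‖ + ‖(1 : ℂ)‖ := norm_sub_le _ _
          _ = z ^ M + 1 := by rw [norm_pow, hw_norm, norm_one]

theorem Wd_eq_pow {a : ℝ} (ha : 0 ≤ a) (T : ℝ) (N M : ℕ) (i : Fin M) :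
    Wd a T N M i = (a ^ (T / N)) ^ (i : ℕ) := by
  rw [Wd, ← Real.rpow_natCast, ← Real.rpow_mul ha]
  ring_nf

theorem one_le_Wd {a T : ℝ} (ha : 1 ≤ a) (hT : 0 ≤ T) (N M : ℕ) (i : Fin M) : 1 ≤ Wd a T N M i :=
  Real.one_le_rpow ha (by positivity)

theorem le_normSq_Wd {a T : ℝ} (ha : 1 ≤ a) (hT : 0 ≤ T) (N M : ℕ) :
    (M : ℝ) ≤ normSq (Wd a T N M) :=
  calc (M : ℝ) = ∑ _i : Fin M, (1 : ℝ) := by simp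
    _ ≤ normSq (Wd a T N M) := Finset.sum_le_sum fun i _ => one_le_pow₀ (one_le_Wd ha hT N M i)

theorem abs_sum_Wd_mul_cos_le {a T ξ : ℝ} (ha : 1 ≤ a) (hT : 0 ≤ T) (hξ : 0 < Real.sin ξ)
    (θ : ℝ) {N M : ℕ} (hN : 0 < N) (hM : M ≤ N) :
    |∑ i : Fin M, Wd a T N M i * Real.cos (ξ * i + θ)| ≤ (a ^ T + 1) / Real.sin ξ := by
  have hz : 1 ≤ a ^ (T / N) := Real.one_le_rpow ha (by positivity)
  have hzN : (a ^ (T / N)) ^ N = a ^ T := by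
    rw [← Real.rpow_natCast, ← Real.rpow_mul (by positivity), div_mul_cancel₀ _ (by positivity)]
  simp only [Wd_eq_pow (zero_le_one.trans ha)]
  rw [Fin.sum_univ_eq_sum_range (fun i => (a ^ (T / N)) ^ i * Real.cos (ξ * i + θ))]
  refine (abs_sum_pow_mul_cos_le hz hξ θ M).trans ?_
  have hzM : (a ^ (T / N)) ^ M ≤ a ^ T := hzN ▸ pow_le_pow_right₀ hz hM
  gcongr

theorem Hd_eq_vecMulVec {a : ℝ} (ha : 0 < a) (T : ℝ) (N L K : ℕ) :
    Hd a T N L K = vecMulVec (Wd a T N L) (Wd a T N K) := by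
  ext i k
  simp only [Hd, xdisc, Wd, of_apply, vecMulVec_apply, ← Real.rpow_add ha]
  push_cast
  ring_nf

theorem Bmat_eq_perturbationMatrix (a T ξ φ δ : ℝ) (N L K : ℕ) :
    Bmat a T ξ φ δ N L K = perturbationMatrix (Hd a T N L K) (Ed ξ φ L K) δ := rfl

theorem abs_Ed_le_one (ξ φ : ℝ) (L K : ℕ) (i : Fin L) (k : Fin K) : |Ed ξ φ L K i k| ≤ 1 :=
  Real.abs_cos_le_one _

theorem abs_Ed_mulVec_Wd_le {a T ξ : ℝ} (ha : 1 ≤ a) (hT : 0 ≤ T) (hξ : 0 < Real.sin ξ) (φ : ℝ)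
    {N L K : ℕ} (hN : 0 < N) (hK : K ≤ N) (j : Fin L) :
    |(Ed ξ φ L K *ᵥ Wd a T N K) j| ≤ (a ^ T + 1) / Real.sin ξ := by
  have hsum : (Ed ξ φ L K *ᵥ Wd a T N K) j
      = ∑ k : Fin K, Wd a T N K k * Real.cos (ξ * k + (ξ * j + φ)) := by
    simp only [mulVec, dotProduct]
    refine Finset.sum_congr rfl fun k _ => ?_
    simp only [Ed, of_apply]
    push_cast
    ring_nf
  exact hsum ▸ abs_sum_Wd_mul_cos_le ha hT hξ (ξ * j + φ) hN hK

theorem abs_Wd_vecMul_Ed_le {a T ξ : ℝ} (ha : 1 ≤ a) (hT : 0 ≤ T) (hξ : 0 < Real.sin ξ) (φ : ℝ)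
    {N L K : ℕ} (hN : 0 < N) (hL : L ≤ N) (k : Fin K) :
    |(Wd a T N L ᵥ* Ed ξ φ L K) k| ≤ (a ^ T + 1) / Real.sin ξ := by
  have hsum : (Wd a T N L ᵥ* Ed ξ φ L K) k
      = ∑ i : Fin L, Wd a T N L i * Real.cos (ξ * i + (ξ * k + φ)) := by
    simp only [vecMul, dotProduct]
    refine Finset.sum_congr rfl fun i _ => ?_
    simp only [Ed, of_apply]
    push_cast
    ring_nf
  exact hsum ▸ abs_sum_Wd_mul_cos_le ha hT hξ (ξ * k + φ) hN hL

theorem exists_pos_eventually_mul_le {L K : ℕ → ℕ} {α : ℝ} (hα : α ∈ Set.Ioo (0 : ℝ) 1)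
    (hsum : ∀ᶠ N in atTop, L N + K N = N + 1)
    (hlim : Tendsto (fun N : ℕ => (L N : ℝ) / N) atTop (nhds α)) :
    ∃ β > (0 : ℝ), ∀ᶠ N in atTop, β * N ≤ L N ∧ β * N ≤ K N := by
  obtain ⟨hα0, hα1⟩ := hα
  have hmin : 0 < min α (1 - α) := lt_min hα0 (by linarith)
  refine ⟨min α (1 - α) / 2, by positivity, ?_⟩
  have hβα : min α (1 - α) / 2 < α := by linarith [min_le_left α (1 - α)]
  have hαβ : α < 1 - min α (1 - α) / 2 := by linarith [min_le_right α (1 - α)]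
  filter_upwards [hlim.eventually (lt_mem_nhds hβα), hlim.eventually (gt_mem_nhds hαβ), hsum,
    eventually_gt_atTop 0] with N hlow hhigh hN hN0
  have hNpos : (0 : ℝ) < N := Nat.cast_pos.mpr hN0
  rw [lt_div_iff₀ hNpos] at hlow
  rw [div_lt_iff₀ hNpos] at hhigh
  have hsumℝ : (L N : ℝ) + K N = N + 1 := by exact_mod_cast hN
  constructor <;> linarith

theorem stmt_13_general (a T ξ φ α : ℝ) (ha : 1 < a) (hT : 0 < T)
    (hξ : ξ ∈ Set.Ioo 0 Real.pi)
    (hα : α ∈ Set.Ioo (0 : ℝ) 1)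
    (L K : ℕ → ℕ)
    (hLK : ∀ N, 3 ≤ N → 1 < L N ∧ 1 < K N ∧ L N + K N = N + 1)
    (hlim : Tendsto (fun N : ℕ => (L N : ℝ) / (N : ℝ)) atTop (nhds α)) :
    ∃ C > (0 : ℝ), ∃ N₀ : ℕ, ∀ N, N₀ ≤ N → ∀ δ : ℝ,
      specNorm
        ((((normSq (Wd a T N (L N))) ^ 2 * normSq (Wd a T N (K N)))⁻¹ •
            Matrix.vecMulVec (Wd a T N (L N)) (Wd a T N (L N))) *
          Bmat a T ξ φ δ N (L N) (K N)) ≤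
      C * (|δ| + δ ^ 2) / (N : ℝ) := by
  have hsin : 0 < Real.sin ξ := Real.sin_pos_of_pos_of_lt_pi hξ.1 hξ.2
  obtain ⟨β, hβ, hLKβ⟩ := exists_pos_eventually_mul_le hα
    ((eventually_ge_atTop 3).mono fun N hN => (hLK N hN).2.2) hlim
  obtain ⟨N₀, hN₀⟩ := (hLKβ.and (eventually_ge_atTop 3)).exists_forall_of_atTop
  set C₁ := (a ^ T + 1) / Real.sin ξ
  refine ⟨2 * C₁ / β, by positivity, N₀, fun N hN δ => ?_⟩
  obtain ⟨⟨hLβ, hKβ⟩, hN3⟩ := hN₀ N hN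
  obtain ⟨hL1, hK1, hsum⟩ := hLK N hN3
  have hNpos : 0 < N := by omega
  have hbound := norm_smul_vecMulVec_mul_perturbationMatrix_le (by omega) (by omega)
    (le_normSq_Wd ha.le hT.le N (L N)) (le_normSq_Wd ha.le hT.le N (K N)) (abs_Ed_le_one ξ φ _ _)
    (abs_Ed_mulVec_Wd_le ha.le hT.le hsin φ hNpos (by omega))
    (abs_Wd_vecMul_Ed_le ha.le hT.le hsin φ hNpos (by omega)) δ
  rw [← Hd_eq_vecMulVec (by positivity) T N (L N) (K N)] at hbound
  rw [specNorm_eq_l2_opNorm, Bmat_eq_perturbationMatrix]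
  refine hbound.trans ?_
  calc C₁ * (2 * |δ| / K N + δ ^ 2 / L N) ≤ C₁ * (2 * |δ| / (β * N) + 2 * δ ^ 2 / (β * N)) := by
        gcongr
        linarith [sq_nonneg δ]
    _ = 2 * C₁ / β * (|δ| + δ ^ 2) / N := by
        field_simp

/-- in the discretization scheme,
`‖S₀B(δ)‖ ≤ C(|δ| + δ²)/N`; in particular `‖S₀B(δ)‖ = O(1/N)` for fixed `δ`. -/
theorem stmt_13 (a T ξ φ α : ℝ) (ha : 1 < a) (hT : 0 < T)
    (hξ : ξ ∈ Set.Ioo 0 Real.pi) (hφ : φ ∈ Set.Ico 0 (2 * Real.pi))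
    (hα : α ∈ Set.Ioo (0 : ℝ) 1)
    (L K : ℕ → ℕ)
    (hLK : ∀ N, 3 ≤ N → 1 < L N ∧ 1 < K N ∧ L N + K N = N + 1)
    (hlim : Tendsto (fun N : ℕ => (L N : ℝ) / (N : ℝ)) atTop (nhds α)) :
    ∃ C > (0 : ℝ), ∃ N₀ : ℕ, ∀ N, N₀ ≤ N → ∀ δ : ℝ,
      specNorm
        ((((normSq (Wd a T N (L N))) ^ 2 * normSq (Wd a T N (K N)))⁻¹ •
            Matrix.vecMulVec (Wd a T N (L N)) (Wd a T N (L N))) *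
          Bmat a T ξ φ δ N (L N) (K N)) ≤
      C * (|δ| + δ ^ 2) / (N : ℝ) :=
  stmt_13_general a T ξ φ α ha hT hξ hα L K hLK hlim
end
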